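/- arXiv:2012.00808 — 2 statements merged into one kernel-verified Lean document; each statement's English description precedes it below -/
import Mathlib

section
/- Let G be a finite simple graph on vertex set [n] = {1,…,n}, let k be an integer with 1 ≤ k ≤ n−1, and let B be the (n;k)-binomial matrix. If v ∈ ℝⁿ is an eigenvector of the Laplacian matrix L(G) with eigenvalue λ, then the vector Bv is nonzero and is an eigenvector of the Laplacian matrix of the k-token graph F_k(G) with the same eigenvalue λ. -/
open Finset Matrix
open scoped symmDiff

/-- The `k`-token graph of a graph `G`: vertices are the `k`-subsets of the vertex set,
two subsets `A`, `B` being adjacent iff their symmetric difference is a pair `{a, b}`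
with `a ∈ A`, `b ∈ B` and `a` adjacent to `b` in `G`. -/
def tokenGraph {V : Type*} [DecidableEq V] (G : SimpleGraph V) (k : ℕ) :
    SimpleGraph {s : Finset V // s.card = k} where
  Adj A B := ∃ a b, a ∈ A.1 ∧ b ∈ B.1 ∧ G.Adj a b ∧ A.1 ∆ B.1 = {a, b}
  symm := by
    constructor
    rintro A B ⟨a, b, ha, hb, hab, hd⟩
    exact ⟨b, a, hb, ha, hab.symm, by rw [symmDiff_comm, hd, Finset.pair_comm]⟩
  loopless := by
    constructor
    rintro A ⟨a, b, ha, hb, hab, hd⟩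
    rw [symmDiff_self] at hd
    exact Finset.insert_ne_empty a {b} hd.symm

/-- The Laplacian matrix (over `ℝ`) of a finite simple graph: `L = D - A`. -/
noncomputable def Lap {V : Type*} [Fintype V] [DecidableEq V] (G : SimpleGraph V) :
    Matrix V V ℝ :=
  letI := Classical.decRel G.Adj
  G.lapMatrix ℝ

/-- The `(n;k)`-binomial matrix: rows indexed by the `k`-subsets of `Fin n`,
columns by elements of `Fin n`; entry is `1` iff the element lies in the subset. -/
def binMatrix (n k : ℕ) : Matrix {s : Finset (Fin n) // s.card = k} (Fin n) ℝ :=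
  Matrix.of fun A j => if j ∈ A.1 then 1 else 0

/-! Identify `B v` with the function `A ↦ ∑ j ∈ A, v j`. The neighbours of `A` in `F_k(G)` are
the sets `A - a + b` with `a ∈ A`, `b ∉ A`, `a ~ b`, so `(L(F_k G) B v)(A)` is the sum of
`v a - v b` over the edges of `G` leaving `A`. The same sum is `∑ a ∈ A, (L(G) v)(a)`, since the
edges inside `A` contribute antisymmetrically; hence `L(F_k G) B = B L(G)`, and eigenvectors are
carried along. For `B v ≠ 0`: if every `k`-subset sum of `v` vanishes and `0 < k < n`, comparing
`t ∪ {i}` with `t ∪ {j}` for a `(k-1)`-set `t` avoiding `i, j` shows `v` is constant, hence zero. -/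

section Swap
variable {V : Type*} [DecidableEq V] {A B : Finset V} {a b : V}

lemma Finset.sdiff_insert_erase (ha : a ∈ A) (hb : b ∉ A) : A \ insert b (A.erase a) = {a} := by
  ext x; simp only [mem_sdiff, mem_insert, mem_erase, mem_singleton]; grind

lemma Finset.insert_erase_sdiff (hb : b ∉ A) : insert b (A.erase a) \ A = {b} := by
  ext x; simp only [mem_sdiff, mem_insert, mem_erase, mem_singleton]; grind

lemma Finset.symmDiff_insert_erase (ha : a ∈ A) (hb : b ∉ A) :
    A ∆ insert b (A.erase a) = {a, b} := by
  rw [symmDiff_def, sup_eq_union, sdiff_insert_erase ha hb, insert_erase_sdiff hb]; rfl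

lemma Finset.card_insert_erase (ha : a ∈ A) (hb : b ∉ A) : #(insert b (A.erase a)) = #A := by
  rw [card_insert_of_notMem (fun h => hb (mem_of_mem_erase h)), card_erase_add_one ha]

lemma Finset.eq_insert_erase_of_symmDiff_eq_pair (ha : a ∈ A) (hb : b ∈ B)
    (h : A ∆ B = {a, b}) : b ∉ A ∧ B = insert b (A.erase a) := by
  have hx : ∀ x, (x ∈ A ∧ x ∉ B) ∨ (x ∈ B ∧ x ∉ A) ↔ x = a ∨ x = b := fun x => by
    rw [← mem_symmDiff, h, mem_insert, mem_singleton]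
  constructor
  · grind
  · ext x; simp only [mem_insert, mem_erase]; grind

lemma Finset.sum_insert_erase {M : Type*} [AddCommGroup M] (w : V → M) (ha : a ∈ A)
    (hb : b ∉ A) : ∑ j ∈ insert b (A.erase a), w j = ∑ j ∈ A, w j - w a + w b := by
  rw [sum_insert (fun h => hb (mem_of_mem_erase h)), sum_erase_eq_sub ha]; abel

end Swap

lemma tokenGraph_adj_iff {V : Type*} [DecidableEq V] {G : SimpleGraph V} {k : ℕ}
    {A B : {s : Finset V // s.card = k}} :
    (tokenGraph G k).Adj A B ↔
      ∃ a ∈ A.1, ∃ b ∉ A.1, G.Adj a b ∧ B.1 = insert b (A.1.erase a) := by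
  constructor
  · rintro ⟨a, b, ha, hb, hab, h⟩
    obtain ⟨hbA, hB⟩ := Finset.eq_insert_erase_of_symmDiff_eq_pair ha hb h
    exact ⟨a, ha, b, hbA, hab, hB⟩
  · rintro ⟨a, ha, b, hb, hab, hB⟩
    exact ⟨a, b, ha, hB ▸ Finset.mem_insert_self b _, hab,
      hB ▸ Finset.symmDiff_insert_erase ha hb⟩

lemma Finset.sum_sum_eq_zero_of_antisymm {ι M : Type*} [AddCommGroup M] [IsAddTorsionFree M]
    (s : Finset ι) (f : ι → ι → M) (hf : ∀ a b, f b a = -f a b) :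
    ∑ a ∈ s, ∑ b ∈ s, f a b = 0 := by
  have h : ∑ a ∈ s, ∑ b ∈ s, f a b = -∑ a ∈ s, ∑ b ∈ s, f a b := by
    conv_lhs => rw [sum_comm]
    rw [← sum_neg_distrib]
    exact sum_congr rfl fun a _ => by rw [← sum_neg_distrib]; exact sum_congr rfl fun b _ => hf a b
  rwa [eq_neg_iff_add_eq_zero, ← two_nsmul, nsmul_eq_zero_iff_right two_ne_zero] at h

section Laplacian
variable {V : Type*} [Fintype V] [DecidableEq V]

lemma lap_mulVec_apply (G : SimpleGraph V) [DecidableRel G.Adj] (w : V → ℝ) (i : V) :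
    (Lap G *ᵥ w) i = ∑ j ∈ G.neighborFinset i, (w i - w j) := by
  rw [Lap, Subsingleton.elim (Classical.decRel G.Adj) ‹_›, SimpleGraph.lapMatrix_mulVec_apply,
    Finset.sum_sub_distrib, Finset.sum_const, SimpleGraph.card_neighborFinset_eq_degree,
    nsmul_eq_mul]

lemma sum_lap_mulVec (G : SimpleGraph V) [DecidableRel G.Adj] (s : Finset V) (w : V → ℝ) :
    ∑ a ∈ s, (Lap G *ᵥ w) a =
      ∑ p ∈ (s ×ˢ sᶜ).filter (fun p => G.Adj p.1 p.2), (w p.1 - w p.2) := by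
  have hsplit : ∀ a, (Lap G *ᵥ w) a = ∑ b ∈ s, (if G.Adj a b then w a - w b else 0)
      + ∑ b ∈ sᶜ, (if G.Adj a b then w a - w b else 0) := fun a => by
    rw [lap_mulVec_apply, SimpleGraph.neighborFinset_eq_filter, Finset.sum_filter,
      Finset.sum_add_sum_compl]
  rw [Finset.sum_congr rfl fun a _ => hsplit a, Finset.sum_add_distrib,
    Finset.sum_sum_eq_zero_of_antisymm, zero_add, Finset.sum_filter, Finset.sum_product]
  intro a b
  simp only [G.adj_comm b a]
  split_ifs <;> ring

lemma lap_tokenGraph_mulVec_sum (G : SimpleGraph V) (k : ℕ) (w : V → ℝ)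
    (A : {s : Finset V // s.card = k}) :
    (Lap (tokenGraph G k) *ᵥ fun B => ∑ j ∈ B.1, w j) A = ∑ a ∈ A.1, (Lap G *ᵥ w) a := by
  classical
  have hmem : ∀ p ∈ (A.1 ×ˢ A.1ᶜ).filter (fun p => G.Adj p.1 p.2),
      p.1 ∈ A.1 ∧ p.2 ∉ A.1 ∧ G.Adj p.1 p.2 := fun p hp => by simpa [and_assoc] using hp
  rw [lap_mulVec_apply, sum_lap_mulVec]
  refine (Finset.sum_bij (fun p hp => ⟨insert p.2 (A.1.erase p.1),
    (Finset.card_insert_erase (hmem p hp).1 (hmem p hp).2.1).trans A.2⟩) ?_ ?_ ?_ ?_).symm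
  · intro p hp
    rw [SimpleGraph.mem_neighborFinset, tokenGraph_adj_iff]
    exact ⟨p.1, (hmem p hp).1, p.2, (hmem p hp).2.1, (hmem p hp).2.2, rfl⟩
  · rintro ⟨a, b⟩ hp ⟨a', b'⟩ hp' h
    obtain ⟨ha, hb, -⟩ := hmem _ hp
    obtain ⟨ha', hb', -⟩ := hmem _ hp'
    have h : insert b (A.1.erase a) = insert b' (A.1.erase a') := congrArg Subtype.val h
    have hA := congrArg (A.1 \ ·) h
    have hB := congrArg (· \ A.1) h
    simp only [Finset.sdiff_insert_erase, Finset.insert_erase_sdiff, ha, hb, ha', hb',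
      not_false_eq_true, Finset.singleton_inj] at hA hB
    rw [hA, hB]
  · intro B hB
    rw [SimpleGraph.mem_neighborFinset, tokenGraph_adj_iff] at hB
    obtain ⟨a, ha, b, hb, hab, hB⟩ := hB
    exact ⟨(a, b), by simpa [and_assoc] using ⟨ha, hb, hab⟩, Subtype.ext hB.symm⟩
  · intro p hp
    rw [Finset.sum_insert_erase w (hmem p hp).1 (hmem p hp).2.1]
    abel

end Laplacian

lemma Finset.eq_zero_of_forall_card_eq_sum_eq_zero {V M : Type*} [Fintype V] [DecidableEq V]
    [AddCommGroup M] [IsAddTorsionFree M] {k : ℕ} (hk1 : 1 ≤ k) (hk2 : k < Fintype.card V)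
    {w : V → M} (h : ∀ A : Finset V, #A = k → ∑ j ∈ A, w j = 0) : w = 0 := by
  have hinsert : ∀ t i, i ∉ t → #t = k - 1 → w i + ∑ j ∈ t, w j = 0 := fun t i hi ht => by
    rw [← sum_insert hi]
    exact h _ (by rw [card_insert_of_notMem hi]; omega)
  have hconst : ∀ i j, w i = w j := by
    intro i j
    obtain ⟨t, hts, ht⟩ := exists_subset_card_eq (s := ({i, j} : Finset V)ᶜ) (n := k - 1) (by
      have := card_insert_le i {j}
      rw [card_singleton] at this
      rw [card_compl]
      omega)
    have hi : i ∉ t := fun hi => by simpa using hts hi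
    have hj : j ∉ t := fun hj => by simpa using hts hj
    exact add_right_cancel ((hinsert t i hi ht).trans (hinsert t j hj ht).symm)
  funext i
  obtain ⟨A, -, hA⟩ :=
    exists_subset_card_eq (s := (univ : Finset V)) (n := k) (by simpa using hk2.le)
  have hsum : #A • w i = 0 := by
    rw [← h A hA, ← sum_const]
    exact sum_congr rfl fun j _ => hconst i j
  rw [hA] at hsum
  exact (nsmul_eq_zero_iff_right (by omega)).mp hsum

lemma binMatrix_mulVec (n k : ℕ) (v : Fin n → ℝ) :
    binMatrix n k *ᵥ v = fun A => ∑ j ∈ A.1, v j := by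
  funext A
  simp [binMatrix, mulVec, dotProduct, ite_mul, sum_ite_mem]

lemma binMatrix_mulVec_ne_zero {n k : ℕ} (hk1 : 1 ≤ k) (hk2 : k ≤ n - 1) {v : Fin n → ℝ}
    (hv : v ≠ 0) : binMatrix n k *ᵥ v ≠ 0 := by
  refine fun h => hv (Finset.eq_zero_of_forall_card_eq_sum_eq_zero hk1
    (by rw [Fintype.card_fin]; omega) fun A hA => ?_)
  simpa [binMatrix_mulVec] using congrFun h ⟨A, hA⟩

lemma lap_tokenGraph_mulVec_binMatrix_mulVec {n : ℕ} (G : SimpleGraph (Fin n)) (k : ℕ)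
    (v : Fin n → ℝ) :
    Lap (tokenGraph G k) *ᵥ (binMatrix n k *ᵥ v) = binMatrix n k *ᵥ (Lap G *ᵥ v) := by
  ext A
  rw [binMatrix_mulVec, binMatrix_mulVec, lap_tokenGraph_mulVec_sum]

/-- If `v` is an eigenvector of the Laplacian of `G` with eigenvalue `λ`,
then `B v` is nonzero and is an eigenvector of the Laplacian of `F_k(G)` with eigenvalue `λ`,
where `B` is the `(n;k)`-binomial matrix. -/
theorem binMatrix_mulVec_eigenvector (n k : ℕ) (hk1 : 1 ≤ k) (hk2 : k ≤ n - 1)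
    (G : SimpleGraph (Fin n)) (lam : ℝ) (v : Fin n → ℝ) (hv : v ≠ 0)
    (hev : Lap G *ᵥ v = lam • v) :
    binMatrix n k *ᵥ v ≠ 0 ∧
      Lap (tokenGraph G k) *ᵥ (binMatrix n k *ᵥ v) = lam • (binMatrix n k *ᵥ v) := by
  refine ⟨binMatrix_mulVec_ne_zero hk1 hk2 hv, ?_⟩
  rw [lap_tokenGraph_mulVec_binMatrix_mulVec, hev, mulVec_smul]
end

section
/- Let G be a finite simple graph on vertex set [n] and let k₁, k₂ be integers with 1 ≤ k₁ ≤ k₂ ≤ n. Let L_{k₁} and L_{k₂} be the Laplacian matrices of F_{k₁}(G) and F_{k₂}(G), and let B be the (n;k₂,k₁)-binomial matrix. Then Bᵀ L_{k₂} B = Bᵀ B L_{k₁}. -/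
open Finset Matrix
open scoped symmDiff

/-- The `(n;k₂,k₁)`-binomial matrix: rows indexed by the `k₂`-subsets, columns by the
`k₁`-subsets of `Fin n`; entry is `1` iff the column subset is contained in the row subset. -/
def binMatrix2 (n k₂ k₁ : ℕ) :
    Matrix {s : Finset (Fin n) // s.card = k₂} {s : Finset (Fin n) // s.card = k₁} ℝ :=
  Matrix.of fun A X => if X.1 ⊆ A.1 then 1 else 0

/-! Each edge `ab` of `G` acts on `k`-sets by the transposition `(a b)`. If `(a b)` moves a `k`-set
`A`, it maps `A` to a neighbour of `A` in `F_k(G)`, and each neighbour arises from exactly one edge.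
Hence `L_k = ∑_{ab ∈ E(G)} (I - P_k(a b))`, with `P_k σ` the permutation matrix of `σ` acting
on `k`-sets. Containment is invariant under permutations, so `P_{k₂} σ B = B P_{k₁} σ`; summing
over the edges gives `L_{k₂} B = B L_{k₁}`, and multiplying by `Bᵀ` on the left gives the claim. -/

open Equiv

section Swap

variable {V : Type*} [DecidableEq V]

lemma Finset.map_swap_eq_self_iff (A : Finset V) (a b : V) :
    A.map (swap a b).toEmbedding = A ↔ (a ∈ A ↔ b ∈ A) := by
  constructor
  · intro h
    have hb := Finset.ext_iff.mp h b
    rwa [Finset.mem_map_equiv, symm_swap, swap_apply_right] at hb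
  · intro h
    ext x
    rw [Finset.mem_map_equiv, symm_swap]
    rcases eq_or_ne x a with rfl | hxa
    · rw [swap_apply_left]; exact h.symm
    rcases eq_or_ne x b with rfl | hxb
    · rw [swap_apply_right]; exact h
    rw [swap_apply_of_ne_of_ne hxa hxb]

lemma Finset.symmDiff_map_swap (A : Finset V) {a b : V}
    (h : A.map (swap a b).toEmbedding ≠ A) : A ∆ A.map (swap a b).toEmbedding = {a, b} := by
  rw [Ne, Finset.map_swap_eq_self_iff] at h
  ext x
  rw [Finset.mem_symmDiff, Finset.mem_map_equiv, symm_swap, Finset.mem_insert,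
    Finset.mem_singleton]
  rcases eq_or_ne x a with rfl | hxa
  · rw [swap_apply_left]; tauto
  rcases eq_or_ne x b with rfl | hxb
  · rw [swap_apply_right]; tauto
  rw [swap_apply_of_ne_of_ne hxa hxb]; tauto

lemma Finset.map_swap_eq_of_symmDiff_eq_pair {A C : Finset V} {a b : V} (ha : a ∈ A)
    (hb : b ∈ C) (h : A ∆ C = {a, b}) : A.map (swap a b).toEmbedding = C := by
  have hmem : ∀ x, (x ∈ A ∧ x ∉ C ∨ x ∈ C ∧ x ∉ A) ↔ (x = a ∨ x = b) := fun x => by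
    simpa only [Finset.mem_symmDiff, Finset.mem_insert, Finset.mem_singleton] using
      Finset.ext_iff.mp h x
  ext x
  rw [Finset.mem_map_equiv, symm_swap]
  rcases eq_or_ne x a with rfl | hxa
  · rw [swap_apply_left]; have := hmem x; have := hmem b; tauto
  rcases eq_or_ne x b with rfl | hxb
  · rw [swap_apply_right]; have := hmem x; have := hmem a; tauto
  rw [swap_apply_of_ne_of_ne hxa hxb]; have := hmem x; tauto

end Swap

section TokenGraph

variable {V : Type*}

def tokenPerm (σ : Perm V) (k : ℕ) : Perm {s : Finset V // s.card = k} :=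
  σ.finsetCongr.subtypeEquiv fun s => by rw [finsetCongr_apply, Finset.card_map]

@[simp]
lemma coe_tokenPerm (σ : Perm V) (k : ℕ) (A : {s : Finset V // s.card = k}) :
    (tokenPerm σ k A : Finset V) = A.1.map σ.toEmbedding :=
  rfl

variable [DecidableEq V]

def Sym2.swap : Sym2 V → Perm V :=
  Sym2.lift ⟨Equiv.swap, swap_comm⟩

@[simp]
lemma Sym2.swap_mk (a b : V) : Sym2.swap s(a, b) = Equiv.swap a b :=
  rfl

variable {G : SimpleGraph V} {k : ℕ}

lemma tokenGraph_adj_tokenPerm_swap {e : Sym2 V} (he : e ∈ G.edgeSet)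
    {A : {s : Finset V // s.card = k}} (hA : tokenPerm e.swap k A ≠ A) :
    (tokenGraph G k).Adj A (tokenPerm e.swap k A) := by
  induction e using Sym2.ind with
  | h a b =>
  rw [Ne, ← Subtype.coe_inj, coe_tokenPerm, Sym2.swap_mk] at hA
  have hsd := A.1.symmDiff_map_swap hA
  rw [Finset.map_swap_eq_self_iff] at hA
  simp only [tokenGraph, coe_tokenPerm, Sym2.swap_mk, hsd]
  by_cases ha : a ∈ A.1
  · refine ⟨a, b, ha, ?_, he, rfl⟩
    rw [Finset.mem_map_equiv, symm_swap, swap_apply_right]; exact ha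
  · refine ⟨b, a, by tauto, ?_, (G.mem_edgeSet.1 he).symm, Finset.pair_comm a b⟩
    rw [Finset.mem_map_equiv, symm_swap, swap_apply_left]; tauto

lemma symmDiff_tokenPerm_swap {e : Sym2 V} {A : {s : Finset V // s.card = k}}
    (hA : tokenPerm e.swap k A ≠ A) : A.1 ∆ (tokenPerm e.swap k A).1 = e.toFinset := by
  induction e using Sym2.ind with
  | h a b =>
  rw [Ne, ← Subtype.coe_inj, coe_tokenPerm, Sym2.swap_mk] at hA
  rw [coe_tokenPerm, Sym2.swap_mk, Sym2.toFinset_mk_eq, A.1.symmDiff_map_swap hA]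

lemma sum_neighborFinset_tokenGraph [Fintype V] [DecidableRel G.Adj]
    [DecidableRel (tokenGraph G k).Adj] {M : Type*} [AddCommMonoid M]
    (A : {s : Finset V // s.card = k}) (f : {s : Finset V // s.card = k} → M) :
    ∑ C ∈ (tokenGraph G k).neighborFinset A, f C =
      ∑ e ∈ G.edgeFinset with tokenPerm e.swap k A ≠ A, f (tokenPerm e.swap k A) := by
  symm
  refine Finset.sum_nbij (fun e => tokenPerm e.swap k A) ?_ ?_ ?_ (fun _ _ => rfl)
  · intro e he
    rw [Finset.mem_filter, SimpleGraph.mem_edgeFinset] at he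
    exact (SimpleGraph.mem_neighborFinset _ _ _).2 (tokenGraph_adj_tokenPerm_swap he.1 he.2)
  · intro e he e' he' (heq : tokenPerm e.swap k A = tokenPerm e'.swap k A)
    rw [Finset.mem_coe, Finset.mem_filter] at he he'
    refine Sym2.ext fun x => ?_
    rw [← Sym2.mem_toFinset, ← Sym2.mem_toFinset, ← symmDiff_tokenPerm_swap he.2,
      ← symmDiff_tokenPerm_swap he'.2, heq]
  · intro C hC
    rw [Finset.mem_coe, SimpleGraph.mem_neighborFinset] at hC
    obtain ⟨a, b, ha, hb, hab, hd⟩ := id hC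
    have hswap : tokenPerm s(a, b).swap k A = C :=
      Subtype.ext (Finset.map_swap_eq_of_symmDiff_eq_pair ha hb hd)
    refine ⟨s(a, b), ?_, hswap⟩
    rw [Finset.mem_coe, Finset.mem_filter, SimpleGraph.mem_edgeFinset, hswap]
    exact ⟨hab, ((tokenGraph G k).ne_of_adj hC).symm⟩

lemma lap_tokenGraph_eq_sum [Fintype V] [DecidableRel G.Adj] (k : ℕ) :
    Lap (tokenGraph G k) = ∑ e ∈ G.edgeFinset, (1 - (tokenPerm e.swap k).permMatrix ℝ) := by
  classical
  refine Matrix.ext_iff_mulVec.2 fun f => funext fun A => ?_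
  have hdeg := sum_neighborFinset_tokenGraph (G := G) A (fun _ => (1 : ℕ))
  simp only [Finset.sum_const, smul_eq_mul, mul_one,
    SimpleGraph.card_neighborFinset_eq_degree] at hdeg
  have hmoved : ∀ e ∈ G.edgeFinset,
      f A - f (tokenPerm e.swap k A) ≠ 0 → tokenPerm e.swap k A ≠ A :=
    fun e _ he hfix => he (by rw [hfix, sub_self])
  rw [Lap, SimpleGraph.lapMatrix_mulVec_apply, sum_neighborFinset_tokenGraph, hdeg,
    Matrix.sum_mulVec, Finset.sum_apply]
  simp only [Matrix.sub_mulVec, Matrix.one_mulVec, Matrix.permMatrix_mulVec, Pi.sub_apply,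
    Function.comp_apply]
  rw [← Finset.sum_filter_of_ne hmoved, Finset.sum_sub_distrib, Finset.sum_const, nsmul_eq_mul]

end TokenGraph

lemma binMatrix2_submatrix_tokenPerm (n k₂ k₁ : ℕ) (σ : Perm (Fin n)) :
    (binMatrix2 n k₂ k₁).submatrix (tokenPerm σ k₂) (tokenPerm σ k₁) = binMatrix2 n k₂ k₁ := by
  ext A X
  simp only [binMatrix2, Matrix.submatrix_apply, Matrix.of_apply, coe_tokenPerm,
    Finset.map_subset_map]

lemma permMatrix_tokenPerm_mul_binMatrix2 (n k₂ k₁ : ℕ) (σ : Perm (Fin n)) :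
    (tokenPerm σ k₂).permMatrix ℝ * binMatrix2 n k₂ k₁ =
      binMatrix2 n k₂ k₁ * (tokenPerm σ k₁).permMatrix ℝ := by
  rw [PEquiv.toMatrix_toPEquiv_mul, PEquiv.mul_toMatrix_toPEquiv]
  conv_rhs => rw [← binMatrix2_submatrix_tokenPerm n k₂ k₁ σ, Matrix.submatrix_submatrix]
  simp

lemma lap_tokenGraph_mul_binMatrix2 (n k₁ k₂ : ℕ) (G : SimpleGraph (Fin n)) :
    Lap (tokenGraph G k₂) * binMatrix2 n k₂ k₁ = binMatrix2 n k₂ k₁ * Lap (tokenGraph G k₁) := by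
  classical
  simp only [lap_tokenGraph_eq_sum, Matrix.sum_mul, Matrix.mul_sum, Matrix.sub_mul,
    Matrix.mul_sub, Matrix.one_mul, Matrix.mul_one, permMatrix_tokenPerm_mul_binMatrix2]

theorem binMatrix2_conj_lap_general (n k₁ k₂ : ℕ) (G : SimpleGraph (Fin n)) :
    (binMatrix2 n k₂ k₁)ᵀ * Lap (tokenGraph G k₂) * binMatrix2 n k₂ k₁ =
      (binMatrix2 n k₂ k₁)ᵀ * binMatrix2 n k₂ k₁ * Lap (tokenGraph G k₁) := by
  rw [Matrix.mul_assoc, lap_tokenGraph_mul_binMatrix2, Matrix.mul_assoc]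

/-- For `1 ≤ k₁ ≤ k₂ ≤ n` and `B` the `(n;k₂,k₁)`-binomial matrix:
`Bᵀ L_{k₂} B = Bᵀ B L_{k₁}`. -/
theorem binMatrix2_conj_lap (n k₁ k₂ : ℕ) (h1 : 1 ≤ k₁) (h2 : k₁ ≤ k₂) (h3 : k₂ ≤ n)
    (G : SimpleGraph (Fin n)) :
    (binMatrix2 n k₂ k₁)ᵀ * Lap (tokenGraph G k₂) * binMatrix2 n k₂ k₁ =
      (binMatrix2 n k₂ k₁)ᵀ * binMatrix2 n k₂ k₁ * Lap (tokenGraph G k₁) :=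
  binMatrix2_conj_lap_general n k₁ k₂ G
end
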